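/- arXiv:2512.00549 — 8 statements merged into one kernel-verified Lean document; each statement's English description precedes it below -/
import Mathlib

section
/- Let H be a separable real Hilbert space with an orthonormal (Hilbert) basis (ψ_{k,m}) indexed by pairs (k,m) ∈ ℕ × ℕ, and let (μ_m)_{m ∈ ℕ} be a non-increasing sequence of strictly positive real numbers converging to 0. Then for every f ∈ H and every ε > 0 there exist an index function φ : [0, μ_0] → ℝ (continuous, non-decreasing, with φ(0) = 0) and an element v ∈ H with ‖v‖ ≤ (1+ε)‖f‖ such that ⟨f, ψ_{k,m}⟩ = φ(μ_m) · ⟨v, ψ_{k,m}⟩ for all k, m ∈ ℕ. -/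
/-!
Write `c_{k,m} = ⟪f, ψ_{k,m}⟫`, `t_m = ∑_k c_{k,m}²` and let `R_m = ∑_{j ≥ m} t_j` be the tails.
The ramp sum `W x = ∑_m t_m min(1, x / μ_m)` is continuous and monotone on `[0, ∞)`, vanishes at
`0`, and dominates the tail, `R_m ≤ W (μ_m)`, because `μ` is antitone. With `s = ε‖f‖` put
`φ(x)² = min(1, √(W x) / s)`. Then `1 / φ(μ_m)² ≤ 1 + s / √R_m`, so the element `v` with
coefficients `c_{k,m} / φ(μ_m)` satisfies `‖v‖² ≤ ‖f‖² + s ∑_m t_m / √R_m ≤ ‖f‖² + 2 s ‖f‖`,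
where the last sum is bounded by telescoping `t_m / √R_m ≤ 2 (√R_m - √R_{m+1})`.
-/

open Finset Set

lemma HasSum.prod_fiberwise_snd {α β γ : Type*} [AddCommMonoid α] [TopologicalSpace α]
    [ContinuousAdd α] [RegularSpace α] {f : β × γ → α} {g : γ → α} {a : α} (hf : HasSum f a)
    (hg : ∀ c, HasSum (fun b => f (b, c)) (g c)) : HasSum g a :=
  ((Equiv.prodComm γ β).hasSum_iff.2 hf).prod_fiberwise hg

lemma hasSum_mul_snd_of_nonneg {ι κ : Type*} {a : ι × κ → ℝ} {t w : κ → ℝ} (ha : 0 ≤ a)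
    (hw : 0 ≤ w) (ht : ∀ m, HasSum (fun k => a (k, m)) (t m))
    (htw : Summable fun m => t m * w m) :
    HasSum (fun p => a p * w p.2) (∑' m, t m * w m) := by
  have hfib : ∀ m, HasSum (fun k => a (k, m) * w m) (t m * w m) := fun m => (ht m).mul_right _
  have hswap : Summable fun q : κ × ι => a q.swap * w q.1 :=
    (summable_prod_of_nonneg fun q => mul_nonneg (ha _) (hw _)).2
      ⟨fun m => (hfib m).summable, by simpa only [Prod.swap_prod_mk, (hfib _).tsum_eq] using htw⟩
  have hsum : Summable fun p => a p * w p.2 := hswap.prod_symm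
  rw [(hsum.hasSum.prod_fiberwise_snd hfib).tsum_eq]
  exact hsum.hasSum

lemma div_sqrt_add_le_two_mul_sub_sqrt {t b : ℝ} (ht : 0 ≤ t) (hb : 0 ≤ b) :
    t / √(t + b) ≤ 2 * (√(t + b) - √b) := by
  rcases (add_nonneg ht hb).eq_or_lt with h0 | hpos
  · obtain rfl : t = 0 := by linarith
    obtain rfl : b = 0 := by linarith
    simp
  rw [div_le_iff₀ (Real.sqrt_pos.2 hpos)]
  have hsq : √(t + b) ^ 2 = t + b := Real.sq_sqrt hpos.le
  have hsqb : √b ^ 2 = b := Real.sq_sqrt hb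
  have hle : √b ≤ √(t + b) := Real.sqrt_le_sqrt (by linarith)
  nlinarith [Real.sqrt_nonneg b]

section TailSums

variable {t : ℕ → ℝ}

lemma tsum_nat_add_eq_add_tsum_nat_add_succ (ht : Summable t) (m : ℕ) :
    ∑' j, t (j + m) = t m + ∑' j, t (j + (m + 1)) := by
  rw [((summable_nat_add_iff m).2 ht).tsum_eq_zero_add]
  simp only [zero_add, add_assoc, add_comm 1]

lemma le_tsum_nat_add (h0 : ∀ m, 0 ≤ t m) (ht : Summable t) (m : ℕ) :
    t m ≤ ∑' j, t (j + m) := by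
  rw [tsum_nat_add_eq_add_tsum_nat_add_succ ht]
  exact le_add_of_nonneg_right (tsum_nonneg fun j => h0 _)

lemma sum_range_div_sqrt_tsum_nat_add_le (h0 : ∀ m, 0 ≤ t m) (ht : Summable t) (n : ℕ) :
    ∑ m ∈ range n, t m / √(∑' j, t (j + m)) ≤ 2 * √(∑' m, t m) := by
  set R : ℕ → ℝ := fun m => ∑' j, t (j + m)
  have hR : ∀ m, 0 ≤ R m := fun m => tsum_nonneg fun j => h0 _
  calc ∑ m ∈ range n, t m / √(R m)
      ≤ ∑ m ∈ range n, 2 * (√(R m) - √(R (m + 1))) := sum_le_sum fun m _ => by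
        rw [show R m = t m + R (m + 1) from tsum_nat_add_eq_add_tsum_nat_add_succ ht m]
        exact div_sqrt_add_le_two_mul_sub_sqrt (h0 m) (hR _)
    _ = 2 * (√(R 0) - √(R n)) := by rw [← mul_sum, sum_range_sub']
    _ ≤ 2 * √(R 0) := by linarith [Real.sqrt_nonneg (R n)]
    _ = 2 * √(∑' m, t m) := by simp [R]

lemma summable_div_sqrt_tsum_nat_add (h0 : ∀ m, 0 ≤ t m) (ht : Summable t) :
    Summable fun m => t m / √(∑' j, t (j + m)) :=
  summable_of_sum_range_le (fun m => div_nonneg (h0 m) (Real.sqrt_nonneg _))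
    (sum_range_div_sqrt_tsum_nat_add_le h0 ht)

lemma tsum_div_sqrt_tsum_nat_add_le (h0 : ∀ m, 0 ≤ t m) (ht : Summable t) :
    ∑' m, t m / √(∑' j, t (j + m)) ≤ 2 * √(∑' m, t m) :=
  Real.tsum_le_of_sum_range_le (fun m => div_nonneg (h0 m) (Real.sqrt_nonneg _))
    (sum_range_div_sqrt_tsum_nat_add_le h0 ht)

end TailSums

noncomputable def rampSum (t μ : ℕ → ℝ) (x : ℝ) : ℝ := ∑' m, t m * min 1 (x / μ m)

section RampSum

variable {t μ : ℕ → ℝ}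

lemma rampSum_zero : rampSum t μ 0 = 0 := by simp [rampSum]

lemma mul_min_one_div_mem_Icc {a b x : ℝ} (ha : 0 ≤ a) (hb : 0 ≤ b) (hx : 0 ≤ x) :
    a * min 1 (x / b) ∈ Icc 0 a :=
  ⟨mul_nonneg ha (le_min zero_le_one (div_nonneg hx hb)),
    mul_le_of_le_one_right ha (min_le_left _ _)⟩

variable (h0 : ∀ m, 0 ≤ t m) (ht : Summable t) (hμ : ∀ m, 0 ≤ μ m)
include h0 ht hμ

lemma summable_mul_min_one_div {x : ℝ} (hx : 0 ≤ x) :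
    Summable fun m => t m * min 1 (x / μ m) :=
  ht.of_nonneg_of_le (fun m => (mul_min_one_div_mem_Icc (h0 m) (hμ m) hx).1)
    (fun m => (mul_min_one_div_mem_Icc (h0 m) (hμ m) hx).2)

lemma continuousOn_rampSum : ContinuousOn (rampSum t μ) (Ici 0) :=
  continuousOn_tsum (fun m => by fun_prop) ht fun m x hx => by
    obtain ⟨hnonneg, hle⟩ := mul_min_one_div_mem_Icc (h0 m) (hμ m) hx
    rwa [Real.norm_of_nonneg hnonneg]

lemma monotoneOn_rampSum : MonotoneOn (rampSum t μ) (Ici 0) := fun x hx y hy hxy =>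
  (summable_mul_min_one_div h0 ht hμ hx).tsum_le_tsum
    (fun m => by have := h0 m; have := hμ m; gcongr) (summable_mul_min_one_div h0 ht hμ hy)

end RampSum

lemma tsum_nat_add_le_rampSum {t μ : ℕ → ℝ} (h0 : ∀ m, 0 ≤ t m) (ht : Summable t)
    (hμ : ∀ m, 0 < μ m) (hanti : Antitone μ) (m : ℕ) :
    ∑' j, t (j + m) ≤ rampSum t μ (μ m) := by
  refine ((summable_nat_add_iff m).2 ht).tsum_le_tsum_of_inj (· + m) (add_left_injective m)
    (fun n _ => (mul_min_one_div_mem_Icc (h0 n) (hμ n).le (hμ m).le).1) (fun j => ?_)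
    (summable_mul_min_one_div h0 ht (fun n => (hμ n).le) (hμ m).le)
  rw [min_eq_left ((one_le_div (hμ _)).2 (hanti (Nat.le_add_left m j))), mul_one]

noncomputable def sourceIndex (W : ℝ → ℝ) (s x : ℝ) : ℝ := √(min 1 (√(W x) / s))

section SourceIndex

variable {W : ℝ → ℝ} {s x : ℝ}

lemma sourceIndex_eq_zero (hW : W x = 0) : sourceIndex W s x = 0 := by
  simp [sourceIndex, hW]

lemma continuousOn_sourceIndex {S : Set ℝ} (hW : ContinuousOn W S) :
    ContinuousOn (sourceIndex W s) S := by
  unfold sourceIndex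
  fun_prop

lemma monotoneOn_sourceIndex {S : Set ℝ} (hs : 0 ≤ s) (hW : MonotoneOn W S) :
    MonotoneOn (sourceIndex W s) S := fun x hx y hy hxy => by
  unfold sourceIndex
  gcongr
  exact hW hx hy hxy

lemma sourceIndex_pos (hs : 0 < s) (hW : 0 < W x) : 0 < sourceIndex W s x :=
  Real.sqrt_pos.2 (lt_min one_pos (div_pos (Real.sqrt_pos.2 hW) hs))

lemma sq_div_sourceIndex_le (hs : 0 < s) {c R : ℝ} (hc : c ^ 2 ≤ R) (hRW : R ≤ W x) :
    (c / sourceIndex W s x) ^ 2 ≤ c ^ 2 + s * (c ^ 2 / √R) := by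
  rcases eq_or_ne c 0 with rfl | hc0
  · simp
  have hR : 0 < R := (by positivity : (0:ℝ) < c ^ 2).trans_le hc
  have hm : 0 < min 1 (√R / s) := lt_min one_pos (div_pos (Real.sqrt_pos.2 hR) hs)
  have hφ : min 1 (√R / s) ≤ sourceIndex W s x ^ 2 := by
    rw [sourceIndex, Real.sq_sqrt (le_min zero_le_one (by positivity))]
    gcongr
  have hinv : (min 1 (√R / s))⁻¹ ≤ 1 + s / √R := by
    rcases le_total 1 (√R / s) with h | h
    · rw [min_eq_left h, inv_one]
      linarith [div_nonneg hs.le (Real.sqrt_nonneg R)]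
    · rw [min_eq_right h, inv_div]
      linarith
  calc (c / sourceIndex W s x) ^ 2 = c ^ 2 * (sourceIndex W s x ^ 2)⁻¹ := by ring
    _ ≤ c ^ 2 * (min 1 (√R / s))⁻¹ := by gcongr
    _ ≤ c ^ 2 * (1 + s / √R) := by gcongr
    _ = c ^ 2 + s * (c ^ 2 / √R) := by ring

end SourceIndex

section Factorization

variable {ι : Type*} {c : ι × ℕ → ℝ} {t μ : ℕ → ℝ} {S : ℝ}
  (hc : HasSum (fun p => c p ^ 2) S) (hfib : ∀ m, HasSum (fun k => c (k, m) ^ 2) (t m))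
  (hμ : ∀ m, 0 < μ m) (hanti : Antitone μ)
include hc hfib hμ hanti

lemma sq_le_tsum_nat_add_le_rampSum (p : ι × ℕ) :
    c p ^ 2 ≤ ∑' j, t (j + p.2) ∧ ∑' j, t (j + p.2) ≤ rampSum t μ (μ p.2) := by
  have ht0 : ∀ m, 0 ≤ t m := fun m => (hfib m).nonneg fun k => sq_nonneg _
  have ht : Summable t := (hc.prod_fiberwise_snd hfib).summable
  exact ⟨(le_hasSum (hfib p.2) p.1 fun k _ => sq_nonneg _).trans (le_tsum_nat_add ht0 ht p.2),
    tsum_nat_add_le_rampSum ht0 ht hμ hanti p.2⟩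

lemma sourceIndex_rampSum_mul_div {s : ℝ} (hs : 0 < s) (p : ι × ℕ) :
    sourceIndex (rampSum t μ) s (μ p.2) * (c p / sourceIndex (rampSum t μ) s (μ p.2)) = c p := by
  refine mul_div_cancel_of_imp' fun hφ => ?_
  by_contra hcp
  obtain ⟨hcR, hRW⟩ := sq_le_tsum_nat_add_le_rampSum hc hfib hμ hanti p
  exact (sourceIndex_pos hs ((by positivity : 0 < c p ^ 2).trans_le (hcR.trans hRW))).ne' hφ

theorem summable_sq_div_sourceIndex_rampSum {s : ℝ} (hs : 0 < s) :
    Summable (fun p => (c p / sourceIndex (rampSum t μ) s (μ p.2)) ^ 2) ∧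
      ∑' p, (c p / sourceIndex (rampSum t μ) s (μ p.2)) ^ 2 ≤ S + 2 * s * √S := by
  have ht0 : ∀ m, 0 ≤ t m := fun m => (hfib m).nonneg fun k => sq_nonneg _
  have ht : HasSum t S := hc.prod_fiberwise_snd hfib
  set R : ℕ → ℝ := fun m => ∑' j, t (j + m)
  have hbound : ∀ p, (c p / sourceIndex (rampSum t μ) s (μ p.2)) ^ 2 ≤
      c p ^ 2 + s * (c p ^ 2 * (√(R p.2))⁻¹) := fun p => by
    obtain ⟨hcR, hRW⟩ := sq_le_tsum_nat_add_le_rampSum hc hfib hμ hanti p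
    simpa only [div_eq_mul_inv] using sq_div_sourceIndex_le hs hcR hRW
  have hweighted := hasSum_mul_snd_of_nonneg (fun p => sq_nonneg (c p))
    (fun m => inv_nonneg.2 (Real.sqrt_nonneg (R m))) hfib
    (by simpa only [div_eq_mul_inv] using summable_div_sqrt_tsum_nat_add ht0 ht.summable)
  have hmajorant := hc.add (hweighted.mul_left s)
  refine ⟨hmajorant.summable.of_nonneg_of_le (fun p => sq_nonneg _) hbound, ?_⟩
  calc ∑' p, (c p / sourceIndex (rampSum t μ) s (μ p.2)) ^ 2
      ≤ S + s * ∑' m, t m * (√(R m))⁻¹ :=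
        hasSum_le hbound (hmajorant.summable.of_nonneg_of_le (fun p => sq_nonneg _) hbound).hasSum
          hmajorant
    _ ≤ S + s * (2 * √S) := by
        gcongr
        simpa only [div_eq_mul_inv, ht.tsum_eq] using tsum_div_sqrt_tsum_nat_add_le ht0 ht.summable
    _ = S + 2 * s * √S := by ring

end Factorization

namespace HilbertBasis

variable {ι H : Type*} [NormedAddCommGroup H] [InnerProductSpace ℝ H] (b : HilbertBasis ι ℝ H)

lemma hasSum_inner_sq (x : H) : HasSum (fun i => inner ℝ x (b i) ^ 2) (‖x‖ ^ 2) := by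
  simpa only [sq, real_inner_comm x, real_inner_self_eq_norm_sq] using b.hasSum_inner_mul_inner x x

lemma exists_inner_eq_of_summable_sq {g : ι → ℝ} (hg : Summable fun i => g i ^ 2) :
    ∃ v : H, (∀ i, inner ℝ v (b i) = g i) ∧ ‖v‖ ^ 2 = ∑' i, g i ^ 2 := by
  have hmem : Memℓp g 2 := memℓp_gen (by simpa using hg)
  have hinner : ∀ i, inner ℝ (b.repr.symm ⟨g, hmem⟩) (b i) = g i := fun i => by
    rw [real_inner_comm, ← b.repr_apply_apply, LinearIsometryEquiv.apply_symm_apply]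
  refine ⟨_, hinner, ?_⟩
  simp only [← (b.hasSum_inner_sq _).tsum_eq, hinner]

end HilbertBasis

theorem stmt_1_general {H : Type*} [NormedAddCommGroup H] [InnerProductSpace ℝ H]
    (ψ : HilbertBasis (ℕ × ℕ) ℝ H) (μ : ℕ → ℝ)
    (hanti : Antitone μ) (hpos : ∀ m, 0 < μ m) :
    ∀ (f : H) (ε : ℝ), 0 < ε →
      ∃ (φ : ℝ → ℝ) (v : H),
        ContinuousOn φ (Set.Icc 0 (μ 0)) ∧
        MonotoneOn φ (Set.Icc 0 (μ 0)) ∧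
        φ 0 = 0 ∧
        ‖v‖ ≤ (1 + ε) * ‖f‖ ∧
        ∀ k m : ℕ, (inner ℝ f (ψ (k, m)) : ℝ) = φ (μ m) * (inner ℝ v (ψ (k, m)) : ℝ) := by
  intro f ε hε
  rcases eq_or_ne f 0 with rfl | hf
  · exact ⟨0, 0, continuousOn_const, monotoneOn_const, rfl, by simp, fun k m => by simp⟩
  set c : ℕ × ℕ → ℝ := fun p => inner ℝ f (ψ p)
  set t : ℕ → ℝ := fun m => ∑' k, c (k, m) ^ 2
  have hc : HasSum (fun p => c p ^ 2) (‖f‖ ^ 2) := ψ.hasSum_inner_sq f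
  have hfib : ∀ m, HasSum (fun k => c (k, m) ^ 2) (t m) :=
    fun m => (hc.summable.prod_symm.prod_factor m).hasSum
  have ht0 : ∀ m, 0 ≤ t m := fun m => tsum_nonneg fun k => sq_nonneg _
  have ht : Summable t := (hc.prod_fiberwise_snd hfib).summable
  have hs : 0 < ε * ‖f‖ := by positivity
  obtain ⟨hsum, hle⟩ := summable_sq_div_sourceIndex_rampSum hc hfib hpos hanti hs
  obtain ⟨v, hv, hvnorm⟩ := ψ.exists_inner_eq_of_summable_sq hsum
  refine ⟨sourceIndex (rampSum t μ) (ε * ‖f‖), v, ?_, ?_, sourceIndex_eq_zero rampSum_zero, ?_,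
    fun k m => ?_⟩
  · exact (continuousOn_sourceIndex (continuousOn_rampSum ht0 ht fun m => (hpos m).le)).mono
      Icc_subset_Ici_self
  · exact (monotoneOn_sourceIndex hs.le (monotoneOn_rampSum ht0 ht fun m => (hpos m).le)).mono
      Icc_subset_Ici_self
  · have hsq : ‖v‖ ^ 2 ≤ ((1 + ε) * ‖f‖) ^ 2 := calc
      ‖v‖ ^ 2 ≤ ‖f‖ ^ 2 + 2 * (ε * ‖f‖) * √(‖f‖ ^ 2) := hvnorm ▸ hle
      _ ≤ ((1 + ε) * ‖f‖) ^ 2 := by rw [Real.sqrt_sq (norm_nonneg f)]; nlinarith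
    exact (pow_le_pow_iff_left₀ (norm_nonneg v) (by positivity) two_ne_zero).1 hsq
  · rw [hv]
    exact (sourceIndex_rampSum_mul_div hc hfib hpos hanti hs (k, m)).symm

/-- In a separable real Hilbert space with Hilbert basis `(ψ_{k,m})`
indexed by `ℕ × ℕ`, and `(μ_m)` a non-increasing sequence of strictly positive
reals tending to `0`, every `f` admits a general source-condition representation:
for every `ε > 0` there are an index function `φ` on `[0, μ 0]` and `v` with
`‖v‖ ≤ (1+ε)‖f‖` and `⟪f, ψ (k,m)⟫ = φ (μ m) * ⟪v, ψ (k,m)⟫` for all `k, m`. -/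
theorem stmt_1 {H : Type*} [NormedAddCommGroup H] [InnerProductSpace ℝ H]
    [CompleteSpace H]
    (ψ : HilbertBasis (ℕ × ℕ) ℝ H) (μ : ℕ → ℝ)
    (hanti : Antitone μ) (hpos : ∀ m, 0 < μ m)
    (hlim : Filter.Tendsto μ Filter.atTop (nhds 0)) :
    ∀ (f : H) (ε : ℝ), 0 < ε →
      ∃ (φ : ℝ → ℝ) (v : H),
        ContinuousOn φ (Set.Icc 0 (μ 0)) ∧
        MonotoneOn φ (Set.Icc 0 (μ 0)) ∧
        φ 0 = 0 ∧
        ‖v‖ ≤ (1 + ε) * ‖f‖ ∧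
        ∀ k m : ℕ, (inner ℝ f (ψ (k, m)) : ℝ) = φ (μ m) * (inner ℝ v (ψ (k, m)) : ℝ) :=
  stmt_1_general ψ μ hanti hpos
end

section
/- (Cordes inequality) Let H be a complex Hilbert space and let T₁ and T₂ be bounded self-adjoint linear operators on H with T₁ ≥ 0 and T₂ ≥ 0. Then for every real p with 0 ≤ p ≤ 1, ‖T₁^p · T₂^p‖ ≤ ‖T₁ · T₂‖^p, where T^p denotes the p-th power of the non-negative operator T obtained via the continuous functional calculus. -/
/-!
For positive `a, b` in a C⋆-algebra put `f t = ‖aᵗ bᵗ‖` and `m = (p + q) / 2`. Then `f m ^ 2` is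
the spectral radius of the self-adjoint element `bᵐ a^(p+q) bᵐ`; since `r(uv) = r(vu)`, cycling
factors turns it into the spectral radius of `(aᵖ bᵖ)(b^q a^q)`, so `f m ^ 2 ≤ f p · f q`.
With `f 0 ≤ 1` and `f 1 = ‖ab‖`, induction gives `f t ≤ ‖ab‖ᵗ` at dyadic `t ∈ [0, 1]`, and
continuity of `t ↦ aᵗ` on `(0, ∞)` extends it to all of `[0, 1]`.
-/

open scoped NNReal

noncomputable def opPow {H : Type*} [NormedAddCommGroup H] [InnerProductSpace ℂ H]
    [CompleteSpace H] (T : H →L[ℂ] H) (p : ℝ) : H →L[ℂ] H :=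
  cfc (fun x : ℝ => x ^ p) T

open scoped ENNReal
open Filter Topology

theorem spectrum.spectralRadius_mul_comm {𝕜 A : Type*} [NormedField 𝕜] [Ring A] [Algebra 𝕜 A]
    (a b : A) : spectralRadius 𝕜 (a * b) = spectralRadius 𝕜 (b * a) := by
  have key : ∀ x y : A, spectralRadius 𝕜 (x * y) ≤ spectralRadius 𝕜 (y * x) := fun x y =>
    iSup₂_le fun k hk => by
      rcases eq_or_ne k 0 with rfl | hk0
      · simp
      · have hk' : k ∈ spectrum 𝕜 (y * x) \ {0} :=
          spectrum.nonzero_mul_comm (𝕜 := 𝕜) x y ▸ ⟨hk, hk0⟩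
        exact le_iSup₂ (f := fun k (_ : k ∈ spectrum 𝕜 (y * x)) => (‖k‖₊ : ℝ≥0∞)) k hk'.1
  exact le_antisymm (key a b) (key b a)

namespace CFC

variable {A : Type*} [PartialOrder A] [Ring A] [StarRing A] [TopologicalSpace A]
  [StarOrderedRing A] [Algebra ℝ A] [ContinuousFunctionalCalculus ℝ A IsSelfAdjoint]
  [NonnegSpectrumClass ℝ A]

lemma rpow_add_of_nonneg {a : A} {x y : ℝ} (hx : 0 ≤ x) (hy : 0 ≤ y) :
    a ^ (x + y) = a ^ x * a ^ y := by
  simp only [rpow_def]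
  rw [← cfc_mul _ _ a]
  exact cfc_congr fun z _ => NNReal.rpow_add_of_nonneg z hx hy

lemma continuousOn_const_rpow (a : A) : ContinuousOn (fun t : ℝ => a ^ t) (Set.Ioi 0) := by
  by_cases ha : 0 ≤ a
  · rw [continuousOn_iff_continuous_domRestrict]
    let F : Set.Ioi (0 : ℝ) → C(spectrum ℝ≥0 a, ℝ≥0) := fun t =>
      ⟨fun x => (x : ℝ≥0) ^ (t : ℝ),
        (NNReal.continuous_rpow_const t.2.le).comp continuous_subtype_val⟩
    have hF : Continuous F :=
      ContinuousMap.continuous_of_continuous_uncurry _ <| continuous_iff_continuousAt.2 fun p =>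
        Tendsto.nnrpow (continuous_subtype_val.comp continuous_snd).continuousAt
          (continuous_subtype_val.comp continuous_fst).continuousAt (Or.inr p.1.2)
    have : (Set.Ioi (0 : ℝ)).domRestrict (fun t : ℝ => a ^ t) = fun t => cfcHom ha (F t) :=
      funext fun t => cfc_apply _ a _ ((NNReal.continuous_rpow_const t.2.le).continuousOn)
    rw [this]
    exact (cfcHom_continuous ha).comp hF
  · simp only [rpow_def, cfc_apply_of_not_predicate a ha]
    exact continuousOn_const

end CFC

section MidpointLogConvex

variable {f : ℝ → ℝ} {c : ℝ}

lemma le_rpow_dyadic_of_sq_midpoint_le (hf : ∀ t, 0 ≤ f t)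
    (hmid : ∀ p q, 0 ≤ p → 0 ≤ q → f ((p + q) / 2) ^ 2 ≤ f p * f q)
    (h0 : f 0 ≤ 1) (h1 : f 1 ≤ c) (n : ℕ) {k : ℕ} (hk : k ≤ 2 ^ n) :
    f (k / 2 ^ n) ≤ c ^ ((k : ℝ) / 2 ^ n) := by
  have hc : 0 ≤ c := (hf 1).trans h1
  induction n generalizing k with
  | zero => interval_cases k <;> simpa
  | succ n ih =>
    set P : ℝ := (((k + 1) / 2 : ℕ) : ℝ) / 2 ^ n
    set Q : ℝ := ((k / 2 : ℕ) : ℝ) / 2 ^ n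
    have hPQ : (k : ℝ) / 2 ^ (n + 1) = (P + Q) / 2 := by
      have : (((k + 1) / 2 : ℕ) : ℝ) + ((k / 2 : ℕ) : ℝ) = k := by
        exact_mod_cast (by omega : (k + 1) / 2 + k / 2 = k)
      rw [← add_div, this, pow_succ, div_div]
    rw [pow_succ] at hk
    have hsq : f ((P + Q) / 2) ^ 2 ≤ (c ^ ((P + Q) / 2)) ^ 2 := calc
      f ((P + Q) / 2) ^ 2 ≤ f P * f Q := hmid P Q (by positivity) (by positivity)
      _ ≤ c ^ P * c ^ Q := mul_le_mul (ih (by omega)) (ih (by omega)) (hf Q) (by positivity)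
      _ = (c ^ ((P + Q) / 2)) ^ 2 := by
        rw [← Real.rpow_add_of_nonneg hc (by positivity) (by positivity),
          ← Real.rpow_mul_natCast hc]
        ring_nf
    rw [hPQ]
    exact (pow_le_pow_iff_left₀ (hf _) (by positivity) two_ne_zero).mp hsq

lemma le_rpow_of_sq_midpoint_le (hf : ∀ t, 0 ≤ f t)
    (hmid : ∀ p q, 0 ≤ p → 0 ≤ q → f ((p + q) / 2) ^ 2 ≤ f p * f q)
    (h0 : f 0 ≤ 1) (h1 : f 1 ≤ c) (hcont : ContinuousOn f (Set.Ioi 0))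
    {p : ℝ} (hp0 : 0 ≤ p) (hp1 : p ≤ 1) : f p ≤ c ^ p := by
  rcases hp0.eq_or_lt with rfl | hp
  · simpa using h0
  -- approximants from above stay in `(0, 1]`, where `f` is continuous
  set q : ℕ → ℝ := fun n => ⌈p * 2 ^ n⌉₊ / 2 ^ n
  have hq : Tendsto q atTop (𝓝 p) :=
    (tendsto_nat_ceil_mul_div_atTop hp0).comp (tendsto_pow_atTop_atTop_of_one_lt one_lt_two)
  have hfq : Tendsto (f ∘ q) atTop (𝓝 (f p)) :=
    (hcont.continuousAt (isOpen_Ioi.mem_nhds hp)).tendsto.comp hq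
  have hcq : Tendsto (fun n => c ^ q n) atTop (𝓝 (c ^ p)) :=
    (Real.continuousAt_const_rpow' hp.ne').tendsto.comp hq
  refine le_of_tendsto_of_tendsto' hfq hcq fun n => ?_
  refine le_rpow_dyadic_of_sq_midpoint_le hf hmid h0 h1 n (Nat.ceil_le.2 ?_)
  push_cast
  exact mul_le_of_le_one_left (by positivity) hp1

end MidpointLogConvex

section CStarAlgebra

variable {A : Type*} [CStarAlgebra A] [PartialOrder A] [StarOrderedRing A]

lemma star_rpow_mul_rpow (a b : A) (p : ℝ) : star (a ^ p * b ^ p) = b ^ p * a ^ p := by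
  rw [star_mul, (IsSelfAdjoint.of_nonneg CFC.rpow_nonneg).star_eq,
    (IsSelfAdjoint.of_nonneg CFC.rpow_nonneg).star_eq]

lemma norm_rpow_mul_rpow_midpoint_sq_le {a b : A} {p q : ℝ} (hp : 0 ≤ p) (hq : 0 ≤ q) :
    ‖a ^ ((p + q) / 2) * b ^ ((p + q) / 2)‖ ^ 2 ≤ ‖a ^ p * b ^ p‖ * ‖a ^ q * b ^ q‖ := by
  nontriviality A
  set m := (p + q) / 2
  have hm : 0 ≤ m := by positivity
  have hstar : star (a ^ m * b ^ m) * (a ^ m * b ^ m) = b ^ m * (a ^ (p + q) * b ^ m) := by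
    rw [star_rpow_mul_rpow, ← add_halves (p + q), CFC.rpow_add_of_nonneg hm hm]
    simp only [mul_assoc]
  have hsa : IsSelfAdjoint (b ^ m * (a ^ (p + q) * b ^ m)) :=
    hstar ▸ IsSelfAdjoint.star_mul_self _
  have hcycle : (a ^ (p + q) * b ^ m) * b ^ m = a ^ q * ((a ^ p * b ^ p) * b ^ q) := by
    rw [mul_assoc, ← CFC.rpow_add_of_nonneg hm hm, add_halves, add_comm p q,
      CFC.rpow_add_of_nonneg hq hp, add_comm q p, CFC.rpow_add_of_nonneg hp hq]
    simp only [mul_assoc]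
  suffices h : ((‖a ^ m * b ^ m‖₊ ^ 2 : ℝ≥0) : ℝ≥0∞) ≤ ‖a ^ p * b ^ p‖₊ * ‖a ^ q * b ^ q‖₊ by
    exact_mod_cast h
  calc ((‖a ^ m * b ^ m‖₊ ^ 2 : ℝ≥0) : ℝ≥0∞)
      = spectralRadius ℂ (b ^ m * (a ^ (p + q) * b ^ m)) := by
        rw [hsa.spectralRadius_eq_nnnorm, ← hstar, CStarRing.nnnorm_star_mul_self, sq]
    _ = spectralRadius ℂ ((a ^ p * b ^ p) * (b ^ q * a ^ q)) := by
        rw [spectrum.spectralRadius_mul_comm, hcycle, spectrum.spectralRadius_mul_comm,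
          mul_assoc]
    _ ≤ ‖(a ^ p * b ^ p) * (b ^ q * a ^ q)‖₊ := spectrum.spectralRadius_le_nnnorm _
    _ ≤ ‖a ^ p * b ^ p‖₊ * ‖b ^ q * a ^ q‖₊ := mod_cast nnnorm_mul_le _ _
    _ = ‖a ^ p * b ^ p‖₊ * ‖a ^ q * b ^ q‖₊ := by rw [← star_rpow_mul_rpow a b q, nnnorm_star]

theorem CStarAlgebra.norm_rpow_mul_rpow_le {a b : A} (ha : 0 ≤ a) (hb : 0 ≤ b) {p : ℝ}
    (hp0 : 0 ≤ p) (hp1 : p ≤ 1) : ‖a ^ p * b ^ p‖ ≤ ‖a * b‖ ^ p := by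
  refine le_rpow_of_sq_midpoint_le (f := fun t => ‖a ^ t * b ^ t‖) (fun _ => norm_nonneg _)
    (fun _ _ => norm_rpow_mul_rpow_midpoint_sq_le) ?_ ?_ ?_ hp0 hp1
  · nontriviality A
    simp [CFC.rpow_zero a ha, CFC.rpow_zero b hb]
  · simp [CFC.rpow_one a ha, CFC.rpow_one b hb]
  · exact ((CFC.continuousOn_const_rpow a).mul (CFC.continuousOn_const_rpow b)).norm

end CStarAlgebra

/-- Cordes inequality: for bounded self-adjoint non-negative
operators `T₁, T₂` on a complex Hilbert space and `0 ≤ p ≤ 1`,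
`‖T₁^p * T₂^p‖ ≤ ‖T₁ * T₂‖ ^ p`. -/
theorem stmt_3 {H : Type*} [NormedAddCommGroup H] [InnerProductSpace ℂ H]
    [CompleteSpace H] (T₁ T₂ : H →L[ℂ] H)
    (h₁ : T₁.IsPositive) (h₂ : T₂.IsPositive)
    (p : ℝ) (hp0 : 0 ≤ p) (hp1 : p ≤ 1) :
    ‖opPow T₁ p * opPow T₂ p‖ ≤ ‖T₁ * T₂‖ ^ p := by
  have hT₁ : 0 ≤ T₁ := T₁.nonneg_iff_isPositive.mpr h₁
  have hT₂ : 0 ≤ T₂ := T₂.nonneg_iff_isPositive.mpr h₂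
  rw [opPow, opPow, ← CFC.rpow_eq_cfc_real hT₁, ← CFC.rpow_eq_cfc_real hT₂]
  exact CStarAlgebra.norm_rpow_mul_rpow_le hT₁ hT₂ hp0 hp1
end

section
/- Let H be a complex Hilbert space, let T and S be bounded self-adjoint non-negative linear operators on H, let λ > 0, and let 0 ≤ q ≤ 1. Then T + λI and S + λI are invertible, and ‖(T + λI)^q · ((S + λI)⁻¹)^q‖ ≤ ‖(T + λI)(S + λI)⁻¹‖^q. In particular, if ‖(T + λI)(S + λI)⁻¹‖ ≤ 2 then ‖(T + λI)^q (S + λI)^{-q}‖ ≤ 2^q. -/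
open scoped NNReal
open Set CFC

lemma CFC.smul_rpow {A : Type*} [PartialOrder A] [Ring A] [StarRing A] [TopologicalSpace A]
    [StarOrderedRing A] [Algebra ℝ A] [ContinuousFunctionalCalculus ℝ A IsSelfAdjoint]
    [NonnegSpectrumClass ℝ A] [IsSemitopologicalRing A] [T2Space A]
    (r : ℝ≥0) {a : A} (ha : 0 ≤ a) {y : ℝ} (hy : 0 ≤ y) :
    (r • a) ^ y = r ^ y • a ^ y := by
  have hcont : Continuous fun x : ℝ≥0 => x ^ y := NNReal.continuous_rpow_const hy
  simp only [rpow_def]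
  rw [← cfc_comp_smul r _ a hcont.continuousOn, ← cfc_smul _ _ a hcont.continuousOn]
  simp only [smul_eq_mul, NNReal.mul_rpow]

namespace CStarAlgebra

variable {A : Type*} [CStarAlgebra A] [PartialOrder A] [StarOrderedRing A]

lemma norm_mul_le_one_iff_rpow_two_le {a b : A} (ha : 0 ≤ a) (hb : IsStrictlyPositive b) :
    ‖a * b‖ ≤ 1 ↔ a ^ (2 : ℝ) ≤ b ^ (-2 : ℝ) := by
  have hsqrt : sqrt (a ^ (2 : ℝ)) = a := by
    rw [sqrt_eq_rpow, rpow_rpow_of_exponent_nonneg a _ _ (by norm_num) (by norm_num)]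
    norm_num [rpow_one a]
  have hb' : (b ^ (-2 : ℝ)) ^ (-(1 / 2) : ℝ) = b := by
    rw [rpow_rpow b _ _ (by norm_num)]
    norm_num [rpow_one b]
  rw [le_iff_norm_sqrt_mul_rpow _ _ rpow_nonneg (IsStrictlyPositive.rpow b _ hb), hsqrt, hb']

lemma norm_rpow_mul_rpow_le_one {a b : A} (ha : 0 ≤ a) (hb : IsStrictlyPositive b)
    {q : ℝ} (hq : q ∈ Icc 0 1) (hab : ‖a * b‖ ≤ 1) : ‖a ^ q * b ^ q‖ ≤ 1 := by
  rcases hq.1.eq_or_lt with rfl | hq0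
  · nontriviality A
    simp [rpow_zero a, rpow_zero b hb.nonneg]
  have hsq : a ^ (2 : ℝ) ≤ b ^ (-2 : ℝ) := (norm_mul_le_one_iff_rpow_two_le ha hb).1 hab
  rw [norm_mul_le_one_iff_rpow_two_le rpow_nonneg (IsStrictlyPositive.rpow b q hb),
    rpow_rpow_of_exponent_nonneg a _ _ hq.1 zero_le_two, rpow_rpow b _ _ hq0.ne',
    mul_comm q, ← rpow_rpow_of_exponent_nonneg a _ _ zero_le_two hq.1, mul_comm q,
    ← rpow_rpow b _ _ (by norm_num)]
  exact rpow_le_rpow hq hsq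

theorem norm_rpow_mul_rpow_le_s4 {a b : A} (ha : 0 ≤ a) (hb : IsStrictlyPositive b)
    {q : ℝ} (hq : q ∈ Icc 0 1) : ‖a ^ q * b ^ q‖ ≤ ‖a * b‖ ^ q := by
  have hscaled : ∀ M ∈ Ioi ‖a * b‖, ‖a ^ q * b ^ q‖ ≤ M ^ q := by
    intro M hM
    have hM0 : 0 < M := (norm_nonneg _).trans_lt hM
    obtain ⟨c, hc⟩ : ∃ c : ℝ≥0, (c : ℝ) = M⁻¹ := ⟨⟨M⁻¹, inv_nonneg.2 hM0.le⟩, rfl⟩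
    have hcb : ‖a * (c • b)‖ ≤ 1 := by
      rw [mul_smul_comm, NNReal.smul_def, norm_smul, NNReal.norm_eq, hc, inv_mul_le_one₀ hM0]
      exact hM.le
    have hc0 : 0 < c := by rw [← NNReal.coe_pos, hc]; positivity
    have := norm_rpow_mul_rpow_le_one ha (hb.smul hc0) hq hcb
    rwa [smul_rpow c hb.nonneg hq.1, mul_smul_comm, NNReal.smul_def, norm_smul, NNReal.norm_eq,
      NNReal.coe_rpow, hc, Real.inv_rpow hM0.le, inv_mul_le_one₀ (by positivity)] at this
  have hcont : ContinuousAt (fun M : ℝ => M ^ q) ‖a * b‖ :=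
    Real.continuousAt_rpow_const _ _ (Or.inr hq.1)
  exact ge_of_tendsto (hcont.tendsto.mono_left nhdsWithin_le_nhds)
    (eventually_nhdsWithin_of_forall hscaled)

lemma isStrictlyPositive_add_smul_one {a : A} (ha : 0 ≤ a) {r : ℝ} (hr : 0 < r) :
    IsStrictlyPositive (a + (r : ℂ) • 1) := by
  rw [Complex.coe_smul]
  exact (IsStrictlyPositive.smul hr isStrictlyPositive_one).nonneg_add ha

end CStarAlgebra

/-- for self-adjoint non-negative bounded operators `T, S` on a
complex Hilbert space, `λ > 0` and `0 ≤ q ≤ 1`, the operators `T + λI` and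
`S + λI` are invertible,
`‖(T + λI)^q ((S + λI)⁻¹)^q‖ ≤ ‖(T + λI)(S + λI)⁻¹‖ ^ q`, and in particular if
`‖(T + λI)(S + λI)⁻¹‖ ≤ 2` then `‖(T + λI)^q (S + λI)^{-q}‖ ≤ 2 ^ q`. -/
theorem stmt_4 {H : Type*} [NormedAddCommGroup H] [InnerProductSpace ℂ H]
    [CompleteSpace H] (T S : H →L[ℂ] H)
    (hT : T.IsPositive) (hS : S.IsPositive)
    (lam : ℝ) (hlam : 0 < lam) (q : ℝ) (hq0 : 0 ≤ q) (hq1 : q ≤ 1) :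
    IsUnit (T + (lam : ℂ) • (1 : H →L[ℂ] H)) ∧
    IsUnit (S + (lam : ℂ) • (1 : H →L[ℂ] H)) ∧
    ‖opPow (T + (lam : ℂ) • 1) q * opPow (Ring.inverse (S + (lam : ℂ) • 1)) q‖
      ≤ ‖(T + (lam : ℂ) • 1) * Ring.inverse (S + (lam : ℂ) • 1)‖ ^ q ∧
    (‖(T + (lam : ℂ) • 1) * Ring.inverse (S + (lam : ℂ) • 1)‖ ≤ 2 →
      ‖opPow (T + (lam : ℂ) • 1) q * opPow (Ring.inverse (S + (lam : ℂ) • 1)) q‖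
        ≤ (2 : ℝ) ^ q) := by
  set Tlam := T + (lam : ℂ) • (1 : H →L[ℂ] H)
  set Slam := S + (lam : ℂ) • (1 : H →L[ℂ] H)
  have hTlam : IsStrictlyPositive Tlam :=
    CStarAlgebra.isStrictlyPositive_add_smul_one (T.nonneg_iff_isPositive.2 hT) hlam
  have hSlam : IsStrictlyPositive Slam :=
    CStarAlgebra.isStrictlyPositive_add_smul_one (S.nonneg_iff_isPositive.2 hS) hlam
  have hcordes : ‖opPow Tlam q * opPow (Ring.inverse Slam) q‖ ≤ ‖Tlam * Ring.inverse Slam‖ ^ q := by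
    rw [opPow, opPow, ← rpow_eq_cfc_real hTlam.nonneg,
      ← rpow_eq_cfc_real hSlam.ringInverse.nonneg]
    exact CStarAlgebra.norm_rpow_mul_rpow_le_s4 hTlam.nonneg hSlam.ringInverse ⟨hq0, hq1⟩
  exact ⟨hTlam.isUnit, hSlam.isUnit, hcordes,
    fun h => hcordes.trans (Real.rpow_le_rpow (norm_nonneg _) h hq0)⟩
end

section
/- For all real numbers α, β with 0 < α ≤ β and every λ > 0, one has for every integer i ≥ 1: i^{-α}/(i^{-β} + λ) ≤ λ^{(α−β)/β}. Equivalently, sup_{i ∈ ℕ, i ≥ 1} [i^{-α}/(i^{-β} + λ)] ≤ λ^{(α−β)/β}. -/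
/-- for `0 < α ≤ β` and `λ > 0`, every integer `i ≥ 1` satisfies
`i^{-α} / (i^{-β} + λ) ≤ λ^{(α-β)/β}`. -/
theorem stmt_5 (α β lam : ℝ) (hα : 0 < α) (hαβ : α ≤ β) (hlam : 0 < lam) :
    ∀ i : ℕ, 1 ≤ i →
      (i : ℝ) ^ (-α) / ((i : ℝ) ^ (-β) + lam) ≤ lam ^ ((α - β) / β) := by
  intro i hi
  have hβ : 0 < β := lt_of_lt_of_le hα hαβ
  have hi0 : (0:ℝ) < i := by exact_mod_cast hi
  set x := (i : ℝ) ^ (-β) with hxdef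
  have hx0 : 0 < x := Real.rpow_pos_of_pos hi0 _
  have hkey : (i : ℝ) ^ (-α) = x ^ (α / β) := by
    rw [hxdef, ← Real.rpow_mul hi0.le]
    congr 1
    field_simp
  have hexp : (α - β) / β = α / β - 1 := by field_simp
  have hle1 : α / β - 1 ≤ 0 := by
    have : α / β ≤ 1 := (div_le_one hβ).mpr hαβ
    linarith
  rw [hkey, hexp]
  rcases le_total x lam with h | h
  · have h1 : x ^ (α / β) ≤ lam ^ (α / β) :=
      Real.rpow_le_rpow hx0.le h (by positivity)
    calc x ^ (α / β) / (x + lam) ≤ lam ^ (α / β) / lam :=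
          div_le_div₀ (by positivity) h1 hlam (by linarith)
      _ = lam ^ (α / β - 1) := by
          rw [Real.rpow_sub hlam, Real.rpow_one]
  · calc x ^ (α / β) / (x + lam) ≤ x ^ (α / β) / x :=
          div_le_div_of_nonneg_left (by positivity) hx0 (by linarith)
      _ = x ^ (α / β - 1) := by rw [Real.rpow_sub hx0, Real.rpow_one]
      _ ≤ lam ^ (α / β - 1) := Real.rpow_le_rpow_of_nonpos hlam h hle1
end

section
/- Let α > 1, β > 1, and q ≥ α/β be real numbers. Then there exists a constant C > 0 such that for all λ > 0, the series ∑_{i=1}^{∞} i^{-α}/(i^{-β} + λ)^q converges and satisfies ∑_{i=1}^{∞} i^{-α}/(i^{-β} + λ)^q ≤ C · λ^{-(1 + βq − α)/β}. -/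
/-!
Write `f i = i^{-α} / (i^{-β} + λ)^q`. Dropping `λ` gives `f i ≤ i^{βq-α}`, dropping `i^{-β}`
gives `f i ≤ i^{-α} λ^{-q}`. For `λ < 1` split the series at `N = ⌈λ^{-1/β}⌉`, where `i^{-β}` and
`λ` become comparable: the first `N` terms contribute at most `N^{1+βq-α}`, and by the integral
test the tail contributes at most `λ^{-q} N^{1-α}/(α-1)`; both are `O(λ^{-(1+βq-α)/β})`.
For `λ ≥ 1` the second bound alone suffices, since then `λ^{-q} ≤ λ^{-(1+βq-α)/β}`.
-/

open Real Finset

lemma sum_range_rpow_neg_le {α x : ℝ} (hα : 1 < α) (hx : 0 < x) (n : ℕ) :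
    ∑ i ∈ range n, (x + ↑(i + 1)) ^ (-α) ≤ x ^ (1 - α) / (α - 1) := by
  have hanti : AntitoneOn (fun y : ℝ => y ^ (-α)) (Set.Icc x (x + n)) :=
    fun y hy z _ hyz => rpow_le_rpow_of_nonpos (hx.trans_le hy.1) hyz (by linarith)
  have hzero : (0 : ℝ) ∉ Set.uIcc x (x + n) := by
    rw [Set.uIcc_of_le (by simp)]
    exact fun h => hx.not_ge h.1
  calc ∑ i ∈ range n, (x + ↑(i + 1)) ^ (-α)
      ≤ ∫ y in x..x + n, y ^ (-α) := hanti.sum_le_integral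
    _ = (x ^ (1 - α) - (x + n) ^ (1 - α)) / (α - 1) := by
      rw [integral_rpow (Or.inr ⟨by linarith, hzero⟩), ← neg_div_neg_eq]
      ring_nf
    _ ≤ x ^ (1 - α) / (α - 1) := by
      gcongr
      exact sub_le_self _ (by positivity)

lemma summable_nat_add_one_rpow_neg {α : ℝ} (hα : 1 < α) :
    Summable fun i : ℕ => ((i : ℝ) + 1) ^ (-α) := by
  simpa using (summable_nat_add_iff 1).2 (summable_nat_rpow.2 (by linarith : -α < -1))

noncomputable def spectralTerm (α β q lam x : ℝ) : ℝ := x ^ (-α) / (x ^ (-β) + lam) ^ q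

section spectralTerm

variable {α β q lam : ℝ}

lemma spectralTerm_nonneg {x : ℝ} (hx : 0 ≤ x) (hlam : 0 ≤ lam) :
    0 ≤ spectralTerm α β q lam x := by
  unfold spectralTerm; positivity

lemma spectralTerm_le_rpow_mul {x : ℝ} (hx : 0 ≤ x) (hq : 0 ≤ q) (hlam : 0 < lam) :
    spectralTerm α β q lam x ≤ x ^ (-α) * lam ^ (-q) := by
  rw [spectralTerm, rpow_neg hlam.le, ← div_eq_mul_inv]
  gcongr
  exact le_add_of_nonneg_left (by positivity)

lemma spectralTerm_le_rpow {x : ℝ} (hx : 0 < x) (hq : 0 ≤ q) (hlam : 0 ≤ lam) :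
    spectralTerm α β q lam x ≤ x ^ (β * q - α) :=
  calc spectralTerm α β q lam x ≤ x ^ (-α) / (x ^ (-β)) ^ q := by
        unfold spectralTerm
        gcongr
        exact le_add_of_nonneg_right hlam
    _ = x ^ (β * q - α) := by
        rw [← rpow_mul hx.le, ← rpow_sub hx]
        ring_nf

lemma summable_spectralTerm (hα : 1 < α) (hq : 0 ≤ q) (hlam : 0 < lam) :
    Summable fun i : ℕ => spectralTerm α β q lam (i + 1) := by
  exact .of_nonneg_of_le (fun i => spectralTerm_nonneg (by positivity) hlam.le)
    (fun i => spectralTerm_le_rpow_mul (by positivity) hq hlam)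
    ((summable_nat_add_one_rpow_neg hα).mul_right (lam ^ (-q)))

lemma sum_range_spectralTerm_le (hαq : α ≤ β * q) (hq : 0 ≤ q) (hlam : 0 ≤ lam) (N : ℕ) :
    ∑ i ∈ range N, spectralTerm α β q lam (i + 1) ≤ (N : ℝ) ^ (1 + β * q - α) := by
  have hterm : ∀ i ∈ range N, spectralTerm α β q lam (i + 1) ≤ (N : ℝ) ^ (β * q - α) := by
    intro i hi
    have hiN : (i : ℝ) + 1 ≤ N := by exact_mod_cast mem_range.1 hi
    exact (spectralTerm_le_rpow (by positivity) hq hlam).trans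
      (rpow_le_rpow (by positivity) hiN (by linarith))
  calc ∑ i ∈ range N, spectralTerm α β q lam (i + 1)
      ≤ N • (N : ℝ) ^ (β * q - α) := by simpa using sum_le_card_nsmul _ _ _ hterm
    _ = (N : ℝ) ^ (1 + β * q - α) := by
      rw [nsmul_eq_mul, add_sub_assoc, rpow_one_add' (by positivity) (by linarith)]

lemma tsum_spectralTerm_nat_add_le (hα : 1 < α) (hq : 0 ≤ q) (hlam : 0 < lam) {N : ℕ}
    (hN : 0 < N) :
    ∑' i : ℕ, spectralTerm α β q lam ((i + N : ℕ) + 1) ≤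
      lam ^ (-q) * ((N : ℝ) ^ (1 - α) / (α - 1)) := by
  refine tsum_le_of_sum_range_le (fun i => spectralTerm_nonneg (by positivity) hlam.le)
    fun n => ?_
  calc ∑ i ∈ range n, spectralTerm α β q lam ((i + N : ℕ) + 1)
      ≤ ∑ i ∈ range n, lam ^ (-q) * ((N : ℝ) + ↑(i + 1)) ^ (-α) := by
        gcongr with i
        rw [mul_comm, show ((i + N : ℕ) : ℝ) + 1 = N + ↑(i + 1) by push_cast; ring]
        exact spectralTerm_le_rpow_mul (by positivity) hq hlam
    _ ≤ lam ^ (-q) * ((N : ℝ) ^ (1 - α) / (α - 1)) := by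
        rw [← mul_sum]
        gcongr
        exact sum_range_rpow_neg_le hα (by exact_mod_cast hN) n

lemma tsum_spectralTerm_le_add (hα : 1 < α) (hαq : α ≤ β * q) (hq : 0 ≤ q) (hlam : 0 < lam)
    {N : ℕ} (hN : 0 < N) :
    ∑' i : ℕ, spectralTerm α β q lam (i + 1) ≤
      (N : ℝ) ^ (1 + β * q - α) + lam ^ (-q) * ((N : ℝ) ^ (1 - α) / (α - 1)) := by
  rw [← (summable_spectralTerm hα hq hlam).sum_add_tsum_nat_add N]
  exact add_le_add (sum_range_spectralTerm_le hαq hq hlam.le N)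
    (tsum_spectralTerm_nat_add_le hα hq hlam hN)

lemma tsum_spectralTerm_le_of_one_le (hα : 1 < α) (hβ : 0 < β) (hq : 0 ≤ q) (hlam : 1 ≤ lam) :
    ∑' i : ℕ, spectralTerm α β q lam (i + 1) ≤
      (∑' i : ℕ, ((i : ℝ) + 1) ^ (-α)) * lam ^ (-(1 + β * q - α) / β) := by
  have hpow := summable_nat_add_one_rpow_neg hα
  calc ∑' i : ℕ, spectralTerm α β q lam (i + 1)
      ≤ ∑' i : ℕ, ((i : ℝ) + 1) ^ (-α) * lam ^ (-q) :=
        (summable_spectralTerm hα hq (by linarith)).tsum_le_tsum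
          (fun i => spectralTerm_le_rpow_mul (by positivity) hq (by linarith))
          (hpow.mul_right _)
    _ = (∑' i : ℕ, ((i : ℝ) + 1) ^ (-α)) * lam ^ (-q) := tsum_mul_right
    _ ≤ (∑' i : ℕ, ((i : ℝ) + 1) ^ (-α)) * lam ^ (-(1 + β * q - α) / β) := by
        gcongr
        rw [neg_div, neg_le_neg_iff, div_le_iff₀ hβ]
        linarith

lemma tsum_spectralTerm_le_of_lt_one (hα : 1 < α) (hβ : 0 < β) (hαq : α ≤ β * q)
    (hlam : 0 < lam) (hlam1 : lam < 1) :
    ∑' i : ℕ, spectralTerm α β q lam (i + 1) ≤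
      (2 ^ (1 + β * q - α) + 1 / (α - 1)) * lam ^ (-(1 + β * q - α) / β) := by
  have hq : 0 ≤ q := (pos_of_mul_pos_right (by linarith : 0 < β * q) hβ.le).le
  set t := lam ^ (-1 / β)
  have ht_rpow : ∀ c, t ^ c = lam ^ (-c / β) := fun c => by
    rw [← rpow_mul hlam.le]; ring_nf
  have ht : 1 < t := one_lt_rpow_of_pos_of_lt_one_of_neg hlam hlam1 (by
    rw [neg_div]; exact neg_neg_of_pos (by positivity))
  set N := ⌈t⌉₊
  have htN : t ≤ N := Nat.le_ceil t
  have hNt : (N : ℝ) ≤ 2 * t := by linarith [Nat.ceil_lt_add_one (by linarith : 0 ≤ t)]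
  have hN : 0 < N := Nat.ceil_pos.2 (by linarith)
  have hlam_rpow : lam ^ (-q) * lam ^ (-(1 - α) / β) = lam ^ (-(1 + β * q - α) / β) := by
    rw [← rpow_add hlam]
    congr 1
    field_simp
    ring
  calc ∑' i : ℕ, spectralTerm α β q lam (i + 1)
      ≤ (N : ℝ) ^ (1 + β * q - α) + lam ^ (-q) * ((N : ℝ) ^ (1 - α) / (α - 1)) :=
        tsum_spectralTerm_le_add hα hαq hq hlam hN
    _ ≤ (2 * t) ^ (1 + β * q - α) + lam ^ (-q) * (t ^ (1 - α) / (α - 1)) := by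
        gcongr ?_ + lam ^ (-q) * (?_ / _)
        · exact rpow_le_rpow (by positivity) hNt (by linarith)
        · exact rpow_le_rpow_of_nonpos (by linarith) htN (by linarith)
    _ = (2 ^ (1 + β * q - α) + 1 / (α - 1)) * lam ^ (-(1 + β * q - α) / β) := by
        rw [mul_rpow zero_le_two (by linarith), ht_rpow, ht_rpow, ← hlam_rpow]
        ring

end spectralTerm

/-- for `α > 1`, `β > 1` and `q ≥ α/β` there is a constant `C > 0`
such that for all `λ > 0` the series `∑_{i=1}^∞ i^{-α}/(i^{-β} + λ)^q`
converges and is bounded by `C · λ^{-(1 + βq - α)/β}`. (The sum over `i ≥ 1`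
is written as a sum over `i : ℕ` of the terms at `i + 1`.) -/
theorem stmt_6 (α β q : ℝ) (hα : 1 < α) (hβ : 1 < β) (hq : α / β ≤ q) :
    ∃ C > (0 : ℝ), ∀ lam > (0 : ℝ),
      Summable (fun i : ℕ =>
        ((i : ℝ) + 1) ^ (-α) / (((i : ℝ) + 1) ^ (-β) + lam) ^ q) ∧
      ∑' i : ℕ, ((i : ℝ) + 1) ^ (-α) / (((i : ℝ) + 1) ^ (-β) + lam) ^ q
        ≤ C * lam ^ (-(1 + β * q - α) / β) := by
  have hβ0 : 0 < β := by linarith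
  have hαq : α ≤ β * q := by rwa [div_le_iff₀ hβ0, mul_comm] at hq
  have hq0 : 0 ≤ q := (div_pos (by linarith) hβ0).le.trans hq
  set S := ∑' i : ℕ, ((i : ℝ) + 1) ^ (-α)
  have hS : 0 ≤ S := tsum_nonneg fun i => by positivity
  have hα1 : 0 < 1 / (α - 1) := one_div_pos.2 (by linarith)
  have h2 : 0 < (2 : ℝ) ^ (1 + β * q - α) := by positivity
  refine ⟨S + 2 ^ (1 + β * q - α) + 1 / (α - 1), by positivity, fun lam hlam =>
    ⟨summable_spectralTerm hα hq0 hlam, ?_⟩⟩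
  have hE : 0 ≤ lam ^ (-(1 + β * q - α) / β) := by positivity
  rcases le_or_gt 1 lam with hlam1 | hlam1
  · exact (tsum_spectralTerm_le_of_one_le hα hβ0 hq0 hlam1).trans
      (mul_le_mul_of_nonneg_right (by linarith) hE)
  · exact (tsum_spectralTerm_le_of_lt_one hα hβ0 hαq hlam hlam1).trans
      (mul_le_mul_of_nonneg_right (by linarith) hE)
end

section
/- Let b > 1 and let (μ_i)_{i ≥ 1} be a sequence of non-negative real numbers satisfying μ_i ≤ C₀ · i^{-b} for all i ≥ 1, for some constant C₀ > 0. Then there exists a constant C > 0 (depending only on b and C₀) such that for all λ > 0, the effective dimension N(λ) := ∑_{i=1}^{∞} μ_i/(μ_i + λ) satisfies N(λ) ≤ C · λ^{-1/b}. -/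
/-!
Each term satisfies `μ i / (μ i + λ) ≤ min 1 (C₀ (i + 1) ^ (-b) / λ)`. Split the sum at
`n = ⌊t⌋` with `t = λ ^ (-1 / b)`: the first `n` terms contribute at most `n ≤ t`. Comparing
the tail of the `p`-series with the telescoping sum of `x ^ (1 - b)` bounds the remaining terms
by `(C₀ / λ) · b / (b - 1) · t ^ (1 - b)`, which equals `C₀ b / (b - 1) · t` since `t ^ (-b) = λ`.
-/

open Real Finset

section PowerTails

variable {b : ℝ}

lemma mul_add_one_rpow_neg_le_sub (hb : 1 ≤ b) {x : ℝ} (hx : 0 < x) :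
    (b - 1) * (x + 1) ^ (-b) ≤ x ^ (1 - b) - (x + 1) ^ (1 - b) := by
  obtain ⟨c, ⟨hxc, hcx⟩, hslope⟩ := exists_hasDerivAt_eq_slope (fun t : ℝ => t ^ (1 - b))
    (fun t => (1 - b) * t ^ (-b)) (lt_add_one x)
    (continuousOn_id.rpow_const fun t ht => Or.inl (hx.trans_le ht.1).ne')
    fun t ht => by
      simpa [sub_sub_cancel_left] using
        hasDerivAt_rpow_const (p := 1 - b) (Or.inl (hx.trans ht.1).ne')
  have hmono : (x + 1) ^ (-b) ≤ c ^ (-b) :=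
    rpow_le_rpow_of_nonpos (hx.trans hxc) hcx.le (by linarith)
  simp only [add_sub_cancel_left, div_one] at hslope
  nlinarith

lemma sum_range_add_rpow_neg_le_of_pos (hb : 1 < b) {x : ℝ} (hx : 0 < x) (N : ℕ) :
    ∑ k ∈ range N, (x + k + 1) ^ (-b) ≤ x ^ (1 - b) / (b - 1) := by
  rw [le_div_iff₀ (sub_pos.2 hb), sum_mul]
  calc ∑ k ∈ range N, (x + k + 1) ^ (-b) * (b - 1)
      ≤ ∑ k ∈ range N, ((x + k) ^ (1 - b) - (x + (k + 1 : ℕ)) ^ (1 - b)) :=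
        sum_le_sum fun k _ => by
          rw [mul_comm, Nat.cast_succ, ← add_assoc]
          exact mul_add_one_rpow_neg_le_sub hb.le (by positivity)
    _ = x ^ (1 - b) - (x + N) ^ (1 - b) := by rw [sum_range_sub']; simp
    _ ≤ x ^ (1 - b) := sub_le_self _ (rpow_nonneg (by positivity) _)

lemma sum_range_add_rpow_neg_le (hb : 1 < b) {x : ℝ} (hx : 0 ≤ x) (N : ℕ) :
    ∑ k ∈ range N, (x + k + 1) ^ (-b) ≤ b / (b - 1) * (x + 1) ^ (1 - b) := by
  have hb1 : 0 < b - 1 := sub_pos.2 hb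
  cases N with
  | zero => simp only [range_zero, sum_empty]; positivity
  | succ N =>
    have hsplit :
        b / (b - 1) * (x + 1) ^ (1 - b) = (x + 1) ^ (1 - b) / (b - 1) + (x + 1) ^ (1 - b) := by
      field_simp; ring
    have hfirst : (x + 1) ^ (-b) ≤ (x + 1) ^ (1 - b) :=
      rpow_le_rpow_of_exponent_le (by linarith) (by linarith)
    rw [sum_range_succ', hsplit]
    push_cast
    simp only [add_zero,
      show ∀ k : ℝ, x + (k + 1) + 1 = x + 1 + k + 1 from fun k => by ring]
    exact add_le_add (sum_range_add_rpow_neg_le_of_pos hb (by positivity) N) hfirst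

end PowerTails

lemma summable_and_tsum_le_of_le_one_of_le_mul_rpow {b c : ℝ} {f : ℕ → ℝ} (hb : 1 < b)
    (hf0 : ∀ i, 0 ≤ f i) (hf1 : ∀ i, f i ≤ 1) (hfc : ∀ i, f i ≤ c * ((i : ℝ) + 1) ^ (-b))
    (n : ℕ) :
    Summable f ∧ ∑' i, f i ≤ n + c * (b / (b - 1) * ((n : ℝ) + 1) ^ (1 - b)) := by
  have hc : 0 ≤ c := by simpa using (hf0 0).trans (hfc 0)
  have htail : ∀ m N : ℕ,
      ∑ k ∈ range N, f (k + m) ≤ c * (b / (b - 1) * ((m : ℝ) + 1) ^ (1 - b)) :=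
    fun m N => calc
      ∑ k ∈ range N, f (k + m) ≤ ∑ k ∈ range N, c * ((m : ℝ) + k + 1) ^ (-b) :=
        sum_le_sum fun k _ => by simpa [add_comm (k : ℝ)] using hfc (k + m)
      _ ≤ c * (b / (b - 1) * ((m : ℝ) + 1) ^ (1 - b)) := by
        rw [← mul_sum]
        exact mul_le_mul_of_nonneg_left (sum_range_add_rpow_neg_le hb m.cast_nonneg N) hc
  have hsum : Summable f := summable_of_sum_range_le hf0 fun N => by simpa using htail 0 N
  refine ⟨hsum, ?_⟩
  rw [← hsum.sum_add_tsum_nat_add n]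
  gcongr
  · simpa using sum_le_card_nsmul (range n) f 1 fun i _ => hf1 i
  · exact Real.tsum_le_of_sum_range_le (fun k => hf0 _) (htail n)

/-- if `b > 1` and the non-negative eigenvalue sequence `(μ_i)_{i ≥ 1}`
satisfies `μ_i ≤ C₀ · i^{-b}`, then there is `C > 0` (depending only on `b, C₀`)
such that the effective dimension `N(λ) = ∑_{i=1}^∞ μ_i/(μ_i + λ)` satisfies
`N(λ) ≤ C · λ^{-1/b}` for all `λ > 0`. (The sequence is indexed by `i : ℕ`,
with `μ i` standing for `μ_{i+1}`.) -/
theorem stmt_7 (b C₀ : ℝ) (hb : 1 < b) (hC₀ : 0 < C₀) (μ : ℕ → ℝ)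
    (hμ : ∀ i, 0 ≤ μ i)
    (hbound : ∀ i : ℕ, μ i ≤ C₀ * ((i : ℝ) + 1) ^ (-b)) :
    ∃ C > (0 : ℝ), ∀ lam > (0 : ℝ),
      Summable (fun i : ℕ => μ i / (μ i + lam)) ∧
      ∑' i : ℕ, μ i / (μ i + lam) ≤ C * lam ^ (-1 / b) := by
  have hb1 : 0 < b - 1 := sub_pos.2 hb
  refine ⟨1 + C₀ * (b / (b - 1)), by positivity, fun lam hlam => ?_⟩
  have hpos : ∀ i, 0 < μ i + lam := fun i => by linarith [hμ i]
  set t := lam ^ (-1 / b) with ht_def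
  have ht : 0 < t := rpow_pos_of_pos hlam _
  have htb : t ^ (1 - b) = lam * t := by
    have hexp : -1 / b * (1 - b) = 1 + -1 / b := by field_simp; ring
    rw [ht_def, ← rpow_mul hlam.le, hexp, rpow_add hlam, rpow_one]
  obtain ⟨hsum, hle⟩ := summable_and_tsum_le_of_le_one_of_le_mul_rpow (c := C₀ / lam) hb
    (fun i => div_nonneg (hμ i) (hpos i).le)
    (fun i => (div_le_one (hpos i)).2 (by linarith))
    (fun i => by
      rw [div_mul_eq_mul_div]
      exact (div_le_div_of_nonneg_left (hμ i) hlam (by linarith [hμ i])).trans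
        (div_le_div_of_nonneg_right (hbound i) hlam.le))
    ⌊t⌋₊
  refine ⟨hsum, hle.trans ?_⟩
  calc (⌊t⌋₊ : ℝ) + C₀ / lam * (b / (b - 1) * ((⌊t⌋₊ : ℝ) + 1) ^ (1 - b))
      ≤ t + C₀ / lam * (b / (b - 1) * t ^ (1 - b)) := by
        gcongr ?_ + _ * (_ * ?_)
        · exact Nat.floor_le ht.le
        · exact rpow_le_rpow_of_nonpos ht (Nat.lt_floor_add_one t).le (by linarith)
    _ = (1 + C₀ * (b / (b - 1))) * t := by rw [htb]; field_simp
end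

section
/- (Varshamov–Gilbert bound) Let M ≥ 8 be an integer. Then there exists a subset Θ = {θ^(0), θ^(1), …, θ^(N)} of {0,1}^M such that θ^(0) = (0, …, 0), the Hamming distance satisfies H(θ, θ') > M/8 for all θ ≠ θ' in Θ, and N ≥ 2^{M/8}; in particular the cardinality of Θ is at least 2^{M/8} + 1. -/
/-!
Take a code containing `0` that is maximal among codes in `{0,1}^M` with minimum distance
`> M/8`. By maximality, the Hamming balls of radius `⌊M/8⌋` around its words cover
`{0,1}^M`, so the code has at least `2^M / V` words, `V = ∑_{j ≤ M/8} (M choose j)` being the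
volume of such a ball. Comparing `V` termwise with the binomial expansion of `(1 + 8)^M`
gives `8^(M - M/8) V ≤ 9^M`, and then `2^M / V > 2^(M/8 + 1)` because `9^8 < 2^26`.
-/

open Finset

theorem pow_sub_mul_sum_range_choose_le {b : ℕ} (hb : 0 < b) {n m : ℕ} (hm : m ≤ n) :
    b ^ (n - m) * ∑ j ∈ range (m + 1), n.choose j ≤ (b + 1) ^ n := by
  calc b ^ (n - m) * ∑ j ∈ range (m + 1), n.choose j
      ≤ ∑ j ∈ range (m + 1), 1 ^ j * b ^ (n - j) * n.choose j := by
        rw [mul_sum]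
        refine sum_le_sum fun j hj => ?_
        rw [one_pow, one_mul]
        exact Nat.mul_le_mul_right _
          (Nat.pow_le_pow_right hb (Nat.sub_le_sub_left (Nat.lt_succ_iff.mp (mem_range.mp hj)) n))
    _ ≤ ∑ j ∈ range (n + 1), 1 ^ j * b ^ (n - j) * n.choose j :=
        sum_le_sum_of_subset (range_subset_range.mpr (by omega))
    _ = (b + 1) ^ n := by rw [add_comm b 1, add_pow]; rfl

theorem two_pow_succ_mul_nine_pow_lt {M : ℕ} (hM : 8 ≤ M) :
    2 ^ (M / 8 + 1) * 9 ^ M < 2 ^ M * 8 ^ (M - M / 8) := by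
  obtain ⟨m, r, hr, rfl⟩ : ∃ m r, r < 8 ∧ M = 8 * m + r :=
    ⟨M / 8, M % 8, by omega, by omega⟩
  have hm : 1 ≤ m := by omega
  have hdiv : (8 * m + r) / 8 = m := by omega
  rw [hdiv, show 8 * m + r - m = 7 * m + r by omega]
  calc 2 ^ (m + 1) * 9 ^ (8 * m + r) = 2 ^ (m + 1) * (9 ^ 8) ^ m * 9 ^ r := by
        rw [← pow_mul, pow_add 9, mul_assoc]
    _ ≤ 2 ^ (m + 1) * (9 ^ 8) ^ m * 16 ^ r := by gcongr; norm_num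
    _ < 2 ^ (m + 1) * (2 ^ 26) ^ m * 16 ^ r := by gcongr; omega
    _ ≤ 2 ^ (m + 1) * (2 ^ 26) ^ m * 16 ^ r * 2 ^ (2 * m - 1) :=
        Nat.le_mul_of_pos_right _ (by positivity)
    _ = 2 ^ (8 * m + r) * 8 ^ (7 * m + r) := by
        rw [show (16 : ℕ) = 2 ^ 4 by norm_num, show (8 : ℕ) = 2 ^ 3 by norm_num,
          ← pow_mul, ← pow_mul, ← pow_mul, ← pow_add, ← pow_add, ← pow_add, ← pow_add]
        congr 1
        omega

section Hamming

variable {ι : Type*} [Fintype ι]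

theorem exists_separated_covering_code {β : ι → Type*} [∀ i, DecidableEq (β i)]
    [Finite (∀ i, β i)] (a : ∀ i, β i) (r : ℕ) :
    ∃ S : Finset (∀ i, β i), a ∈ S ∧ (S : Set (∀ i, β i)).Pairwise (r < hammingDist · ·) ∧
      ∀ v, ∃ c ∈ S, hammingDist v c ≤ r := by
  let IsCode (S : Finset (∀ i, β i)) :=
    a ∈ S ∧ (S : Set (∀ i, β i)).Pairwise (r < hammingDist · ·)
  have hsingleton : IsCode {a} := ⟨mem_singleton_self a, by simp⟩
  obtain ⟨S, -, hS⟩ := Finite.exists_le_maximal hsingleton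
  refine ⟨S, hS.1.1, hS.1.2, fun v => ?_⟩
  by_contra! hfar
  have hv : v ∉ S := fun hv => by simpa using hfar v hv
  have hinsert : IsCode (insert v S) := by
    refine ⟨mem_insert_of_mem hS.1.1, ?_⟩
    rw [coe_insert, Set.pairwise_insert]
    exact ⟨hS.1.2, fun c hc _ => ⟨hfar c hc, hammingDist_comm v c ▸ hfar c hc⟩⟩
  exact hv (hS.2 hinsert (subset_insert v S) (mem_insert_self v S))

variable [DecidableEq ι]

theorem card_hammingDist_le_le_sum_choose (c : ι → Bool) (r : ℕ) :
    #{y | hammingDist y c ≤ r} ≤ ∑ j ∈ range (r + 1), (Fintype.card ι).choose j := by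
  let flip (s : Finset ι) : ι → Bool := fun i => xor (c i) (decide (i ∈ s))
  have hball : ({y | hammingDist y c ≤ r} : Finset (ι → Bool)) ⊆
      ((range (r + 1)).biUnion fun j => powersetCard j univ).image flip := by
    intro y hy
    rw [mem_filter] at hy
    refine mem_image.mpr ⟨({i | y i ≠ c i} : Finset ι), ?_, ?_⟩
    · exact mem_biUnion.mpr ⟨_, mem_range.mpr (Nat.lt_succ_of_le hy.2),
        mem_powersetCard.mpr ⟨subset_univ _, rfl⟩⟩
    · funext i
      simp only [flip, mem_filter, mem_univ, true_and]
      cases y i <;> cases c i <;> rfl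
  calc #{y | hammingDist y c ≤ r} ≤ #((range (r + 1)).biUnion fun j => powersetCard j univ) :=
        (card_le_card hball).trans card_image_le
    _ ≤ ∑ j ∈ range (r + 1), #(powersetCard j (univ : Finset ι)) := card_biUnion_le
    _ = ∑ j ∈ range (r + 1), (Fintype.card ι).choose j := by
        simp only [card_powersetCard, card_univ]

theorem two_pow_card_le_card_mul_sum_choose {S : Finset (ι → Bool)} {r : ℕ}
    (hS : ∀ v, ∃ c ∈ S, hammingDist v c ≤ r) :
    2 ^ Fintype.card ι ≤ #S * ∑ j ∈ range (r + 1), (Fintype.card ι).choose j := by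
  have hcover : (univ : Finset (ι → Bool)) ⊆ S.biUnion fun c => {y | hammingDist y c ≤ r} := by
    intro v _
    obtain ⟨c, hc, hvc⟩ := hS v
    exact mem_biUnion.mpr ⟨c, hc, mem_filter.mpr ⟨mem_univ v, hvc⟩⟩
  calc 2 ^ Fintype.card ι = #(univ : Finset (ι → Bool)) := by simp
    _ ≤ _ := (card_le_card hcover).trans
        (card_biUnion_le_card_mul _ _ _ fun c _ => card_hammingDist_le_le_sum_choose c r)

end Hamming

theorem Finset.exists_injective_fin_zero_eq {α : Type*} {s : Finset α} {a : α} (ha : a ∈ s)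
    {N : ℕ} (hN : #s = N + 1) :
    ∃ θ : Fin (N + 1) → α, θ 0 = a ∧ Function.Injective θ ∧ ∀ i, θ i ∈ s := by
  let e : s ≃ Fin (N + 1) := s.equivFinOfCardEq hN
  let σ : Equiv.Perm (Fin (N + 1)) := Equiv.swap 0 (e ⟨a, ha⟩)
  refine ⟨fun i => e.symm (σ i), ?_, ?_, fun i => (e.symm (σ i)).2⟩
  · simp [σ]
  · exact Subtype.val_injective.comp (e.symm.injective.comp σ.injective)

/-- Varshamov–Gilbert bound: for every integer `M ≥ 8` there exist
`N` with `N ≥ 2^{M/8}` and distinct elements `θ^(0), …, θ^(N)` of `{0,1}^M` with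
`θ^(0) = (0,…,0)` and pairwise Hamming distance `> M/8`; in particular the set
`{θ^(0), …, θ^(N)}` has cardinality at least `2^{M/8} + 1`. -/
theorem stmt_8 (M : ℕ) (hM : 8 ≤ M) :
    ∃ (N : ℕ) (θ : Fin (N + 1) → (Fin M → Bool)),
      θ 0 = (fun _ => false) ∧
      Function.Injective θ ∧
      (∀ i j : Fin (N + 1), i ≠ j →
        (M : ℝ) / 8 < (hammingDist (θ i) (θ j) : ℝ)) ∧
      (2 : ℝ) ^ ((M : ℝ) / 8) ≤ (N : ℝ) := by
  obtain ⟨S, hS0, hsep, hcover⟩ :=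
    exists_separated_covering_code (fun _ : Fin M => false) (M / 8)
  have hcount := two_pow_card_le_card_mul_sum_choose hcover
  rw [Fintype.card_fin] at hcount
  have htail := pow_sub_mul_sum_range_choose_le (b := 8) (by norm_num) (Nat.div_le_self M 8)
  set V := ∑ j ∈ range (M / 8 + 1), M.choose j
  have hcard : 2 ^ (M / 8 + 1) < #S := by
    refine Nat.lt_of_mul_lt_mul_right (a := 8 ^ (M - M / 8) * V) ?_
    calc 2 ^ (M / 8 + 1) * (8 ^ (M - M / 8) * V) ≤ 2 ^ (M / 8 + 1) * 9 ^ M := by gcongr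
      _ < 2 ^ M * 8 ^ (M - M / 8) := two_pow_succ_mul_nine_pow_lt hM
      _ ≤ #S * V * 8 ^ (M - M / 8) := by gcongr
      _ = #S * (8 ^ (M - M / 8) * V) := by ring
  obtain ⟨N, hN⟩ := Nat.exists_eq_add_one_of_ne_zero (Nat.zero_lt_of_lt hcard).ne'
  obtain ⟨θ, hθ0, hθinj, hθS⟩ := exists_injective_fin_zero_eq hS0 hN
  refine ⟨N, θ, hθ0, hθinj, fun i j hij => ?_, ?_⟩
  · have hdist :=
      Nat.div_lt_iff_lt_mul (by norm_num) |>.mp (hsep (hθS i) (hθS j) (hθinj.ne hij))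
    rw [div_lt_iff₀ (by norm_num)]
    exact_mod_cast hdist
  · calc (2 : ℝ) ^ ((M : ℝ) / 8) ≤ 2 ^ ((M / 8 + 1 : ℕ) : ℝ) := by
          refine Real.rpow_le_rpow_of_exponent_le one_le_two ?_
          rw [div_le_iff₀ (by norm_num)]
          exact_mod_cast (by omega : M ≤ (M / 8 + 1) * 8)
      _ ≤ N := by
          rw [Real.rpow_natCast]
          exact_mod_cast (show 2 ^ (M / 8 + 1) ≤ N by omega)
end

section
/- Let (ξ_m)_{m ≥ 1} be a summable sequence of non-negative real numbers and let ε > 0. Then there exists a sequence (σ_m)_{m ≥ 1} of real numbers with 1 ≥ σ_1 ≥ σ_2 ≥ ⋯ > 0 and σ_m → 0 as m → ∞, such that ∑_{m=1}^{∞} ξ_m/σ_m ≤ (1 + ε) · ∑_{m=1}^{∞} ξ_m. -/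
/-!
Let `T m` be the tail sums of `ξ m + 2⁻ᵐ` and `g m = √(T m)`, so that `g` decreases to `0` and
`ξ m ≤ g m ^ 2 - g (m + 1) ^ 2`. Then `ξ m / g m ≤ 2 (g m - g (m + 1))`, which telescopes, so
`∑ ξ m / g m` converges. For `d > 0` the sequence `σ m = g m / (g m + d)` decreases to `0` and
`ξ m / σ m = ξ m + d · ξ m / g m`; taking `d` small makes the excess over `∑ ξ m` at most
`ε ∑ ξ m`.
-/

open Filter Topology

lemma div_le_two_mul_sub_of_le_sq_sub_sq {x a b : ℝ} (ha : 0 < a) (hx : x ≤ a ^ 2 - b ^ 2) :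
    x / a ≤ 2 * (a - b) := by
  rw [div_le_iff₀ ha]
  nlinarith [sq_nonneg (a - b)]

lemma summable_div_of_le_sq_sub_sq {x g : ℕ → ℝ} (hx : ∀ m, 0 ≤ x m) (hg : ∀ m, 0 < g m)
    (hxg : ∀ m, x m ≤ g m ^ 2 - g (m + 1) ^ 2) : Summable fun m => x m / g m := by
  refine summable_of_sum_range_le (c := 2 * g 0) (fun m => div_nonneg (hx m) (hg m).le) fun n => ?_
  calc ∑ i ∈ Finset.range n, x i / g i
      ≤ ∑ i ∈ Finset.range n, 2 * (g i - g (i + 1)) :=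
        Finset.sum_le_sum fun i _ => div_le_two_mul_sub_of_le_sq_sub_sq (hg i) (hxg i)
    _ = 2 * (g 0 - g n) := by rw [← Finset.mul_sum, Finset.sum_range_sub']
    _ ≤ 2 * g 0 := by linarith [hg n]

lemma tsum_nat_add_eq_add_tsum_nat_add {f : ℕ → ℝ} (hf : Summable f) (m : ℕ) :
    ∑' k, f (k + m) = f m + ∑' k, f (k + (m + 1)) := by
  rw [((summable_nat_add_iff m).mpr hf).tsum_eq_zero_add, zero_add]
  simp only [add_right_comm _ 1 m, add_assoc]

lemma exists_antitone_tendsto_zero_summable_div {ξ : ℕ → ℝ} (hξ : ∀ m, 0 ≤ ξ m)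
    (hsum : Summable ξ) :
    ∃ g : ℕ → ℝ, Antitone g ∧ (∀ m, 0 < g m) ∧ Tendsto g atTop (𝓝 0) ∧
      Summable fun m => ξ m / g m := by
  set η : ℕ → ℝ := fun m => ξ m + (1 / 2) ^ m
  have hη : Summable η := hsum.add (summable_geometric_of_lt_one (by norm_num) (by norm_num))
  have hξη : ∀ m, ξ m < η m := fun m => lt_add_of_pos_right _ (by positivity)
  set T : ℕ → ℝ := fun m => ∑' k, η (k + m)
  have hT_succ : ∀ m, T m = η m + T (m + 1) := tsum_nat_add_eq_add_tsum_nat_add hη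
  have hT_pos : ∀ m, 0 < T m := fun m => by
    rw [hT_succ]
    exact add_pos_of_pos_of_nonneg ((hξ m).trans_lt (hξη m))
      (tsum_nonneg fun k => ((hξ _).trans_lt (hξη _)).le)
  have hT_sq : ∀ m, √(T m) ^ 2 = T m := fun m => Real.sq_sqrt (hT_pos m).le
  refine ⟨fun m => √(T m), ?_, fun m => Real.sqrt_pos.mpr (hT_pos m), ?_, ?_⟩
  · refine antitone_nat_of_succ_le fun m => Real.sqrt_le_sqrt ?_
    linarith [hT_succ m, hξ m, hξη m]
  · simpa using (tendsto_sum_nat_add η).sqrt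
  · refine summable_div_of_le_sq_sub_sq hξ (fun m => Real.sqrt_pos.mpr (hT_pos m)) fun m => ?_
    rw [hT_sq, hT_sq]
    linarith [hT_succ m, hξη m]

lemma exists_antitone_tendsto_zero_tsum_div_le_add {ξ : ℕ → ℝ} (hξ : ∀ m, 0 ≤ ξ m)
    (hsum : Summable ξ) {c : ℝ} (hc : 0 < c) :
    ∃ σ : ℕ → ℝ, σ 0 ≤ 1 ∧ Antitone σ ∧ (∀ m, 0 < σ m) ∧ Tendsto σ atTop (𝓝 0) ∧
      Summable (fun m => ξ m / σ m) ∧ ∑' m, ξ m / σ m ≤ ∑' m, ξ m + c := by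
  obtain ⟨g, hg_anti, hg_pos, hg_lim, hg_sum⟩ := exists_antitone_tendsto_zero_summable_div hξ hsum
  set S := ∑' m, ξ m / g m
  have hS : 0 ≤ S := tsum_nonneg fun m => div_nonneg (hξ m) (hg_pos m).le
  set d := c / (S + 1)
  have hd : 0 < d := by positivity
  have hσ_eq : ∀ m, g m / (g m + d) = 1 - d / (g m + d) := fun m => by
    field_simp [(by linarith [hg_pos m] : g m + d ≠ 0)]
    ring
  have hdiv_eq : (fun m => ξ m / (g m / (g m + d))) = fun m => ξ m + d * (ξ m / g m) := by
    funext m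
    field_simp [(hg_pos m).ne']
  refine ⟨fun m => g m / (g m + d), (div_le_one (by linarith [hg_pos 0])).mpr (by linarith),
    fun a b hab => ?_, fun m => by have := hg_pos m; positivity, ?_, ?_, ?_⟩
  · simp only [hσ_eq]
    gcongr
    · linarith [hg_pos b]
    · exact hg_anti hab
  · have := hg_lim.div (hg_lim.add_const d) (by rw [zero_add]; exact hd.ne')
    rwa [zero_div] at this
  · rw [hdiv_eq]
    exact hsum.add (hg_sum.mul_left d)
  · rw [hdiv_eq, hsum.tsum_add (hg_sum.mul_left d), tsum_mul_left]
    have hdS : d * S ≤ c := by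
      rw [div_mul_eq_mul_div, div_le_iff₀ (by linarith)]
      nlinarith
    linarith

/-- for a summable sequence `(ξ_m)` of non-negative reals and
`ε > 0`, there is a non-increasing sequence `(σ_m)` with `1 ≥ σ_0 ≥ σ_1 ≥ ⋯ > 0`
tending to `0` such that `∑ ξ_m/σ_m ≤ (1+ε) ∑ ξ_m`. -/
theorem stmt_13 (ξ : ℕ → ℝ) (hξ : ∀ m, 0 ≤ ξ m) (hsum : Summable ξ)
    (ε : ℝ) (hε : 0 < ε) :
    ∃ σ : ℕ → ℝ,
      σ 0 ≤ 1 ∧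
      Antitone σ ∧
      (∀ m, 0 < σ m) ∧
      Filter.Tendsto σ Filter.atTop (nhds 0) ∧
      Summable (fun m => ξ m / σ m) ∧
      ∑' m, ξ m / σ m ≤ (1 + ε) * ∑' m, ξ m := by
  rcases (tsum_nonneg hξ).eq_or_lt with hA | hA
  · have hξ_zero : ∀ m, ξ m = 0 := fun m =>
      le_antisymm (hA ▸ hsum.le_tsum m fun k _ => hξ k) (hξ m)
    obtain ⟨σ, hσ0, hσ_anti, hσ_pos, hσ_lim, -⟩ :=
      exists_antitone_tendsto_zero_tsum_div_le_add hξ hsum one_pos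
    exact ⟨σ, hσ0, hσ_anti, hσ_pos, hσ_lim, by simp [hξ_zero, summable_zero]⟩
  · obtain ⟨σ, hσ0, hσ_anti, hσ_pos, hσ_lim, hσ_sum, hσ_le⟩ :=
      exists_antitone_tendsto_zero_tsum_div_le_add hξ hsum (mul_pos hε hA)
    exact ⟨σ, hσ0, hσ_anti, hσ_pos, hσ_lim, hσ_sum, by linarith⟩
end
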